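/- For all y ∈ ℝ, y·M(1, 3/2, y²/2) + √(π/2)·M(1/2, 1/2, y²/2) = √(2π)·e^{y²/2}·Φ(y), where Φ(y) = (1/√(2π))·∫_{−∞}^{y} e^{−s²/2} ds is the standard normal cumulative distribution function. -/

import Mathlib

/-!
Writing `G y = y * M 1 (3/2) (y²/2) = ∑ y^(2n+1) / (2n+1)‼`, termwise differentiation gives
`G' = 1 + y G` with `G 0 = 0`, so `(e^{-y²/2} G)' = e^{-y²/2}` and
`G y = e^{y²/2} ∫₀^y e^{-s²/2} ds`. Together with `M(1/2, 1/2, z) = e^z` and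
`∫_{-∞}^0 e^{-s²/2} ds = √(π/2)`, the identity is `∫_{-∞}^y = ∫_{-∞}^0 + ∫₀^y`.
-/

open Real Filter Polynomial MeasureTheory

/-- Confluent hypergeometric function of the first kind,
`M(γ,β,z) = ∑ (γ)⁽ⁿ⁾ zⁿ / ((β)⁽ⁿ⁾ n!)`. -/
noncomputable def M (γ β z : ℝ) : ℝ :=
  ∑' n : ℕ, ((ascPochhammer ℝ n).eval γ * z ^ n) /
    ((ascPochhammer ℝ n).eval β * (Nat.factorial n : ℝ))

/-- The standard normal cumulative distribution function. -/
noncomputable def Phi (y : ℝ) : ℝ :=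
  (1 / Real.sqrt (2 * Real.pi)) * ∫ s in Set.Iic y, Real.exp (-s ^ 2 / 2)

open scoped Nat

theorem Nat.factorial_succ_le_doubleFactorial (n : ℕ) : (n + 1)! ≤ (2 * n + 1)‼ := by
  induction n with
  | zero => rfl
  | succ n ih =>
    rw [Nat.factorial_succ, show 2 * (n + 1) + 1 = 2 * n + 1 + 2 by ring,
      Nat.doubleFactorial_add_two]
    exact Nat.mul_le_mul (by omega) ih

theorem ascPochhammer_eval_three_halves (n : ℕ) :
    (ascPochhammer ℝ n).eval (3 / 2 : ℝ) = ((2 * n + 1)‼ : ℝ) / 2 ^ n := by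
  induction n with
  | zero => simp
  | succ n ih =>
    rw [ascPochhammer_succ_eval, ih, show 2 * (n + 1) + 1 = 2 * n + 1 + 2 by ring,
      Nat.doubleFactorial_add_two]
    push_cast
    field_simp
    ring

theorem M_self_eq_exp {β : ℝ} (hβ : 0 < β) (z : ℝ) : M β β z = Real.exp z := by
  have hterm (n : ℕ) : (ascPochhammer ℝ n).eval β * z ^ n / ((ascPochhammer ℝ n).eval β * n !) =
      z ^ n / n ! :=
    mul_div_mul_left _ _ (ascPochhammer_pos n β hβ).ne'
  rw [M, tsum_congr hterm, Real.exp_eq_exp_ℝ, NormedSpace.exp_eq_tsum_div]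

namespace OddSeries

noncomputable def term (n : ℕ) (y : ℝ) : ℝ := y ^ (2 * n + 1) / (2 * n + 1)‼

noncomputable def termDeriv (n : ℕ) (y : ℝ) : ℝ := (2 * n + 1) * y ^ (2 * n) / (2 * n + 1)‼

noncomputable def sum (y : ℝ) : ℝ := ∑' n, term n y

theorem hasDerivAt_term (n : ℕ) (y : ℝ) : HasDerivAt (term n) (termDeriv n y) y :=
  ((hasDerivAt_pow (2 * n + 1) y).div_const _).congr_deriv (by simp [termDeriv])

theorem termDeriv_zero (y : ℝ) : termDeriv 0 y = 1 := by
  simp [termDeriv]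

theorem termDeriv_succ (n : ℕ) (y : ℝ) : termDeriv (n + 1) y = y * term n y := by
  rw [termDeriv, term, show 2 * (n + 1) + 1 = 2 * n + 1 + 2 by ring,
    Nat.doubleFactorial_add_two, show 2 * (n + 1) = 2 * n + 1 + 1 by ring]
  have : (0 : ℝ) < (2 * n + 1)‼ := mod_cast Nat.doubleFactorial_pos _
  push_cast
  field_simp
  ring

theorem norm_termDeriv_le {R z : ℝ} (hz : |z| ≤ R) (n : ℕ) :
    ‖termDeriv n z‖ ≤ 2 * (R ^ 2) ^ n / n ! := by
  have hfac : (0 : ℝ) < n ! := mod_cast n.factorial_pos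
  have hdf : ((n + 1)! : ℝ) ≤ (2 * n + 1)‼ := mod_cast n.factorial_succ_le_doubleFactorial
  have hpow : |z| ^ (2 * n) ≤ (R ^ 2) ^ n := by
    rw [pow_mul]
    gcongr
  calc ‖termDeriv n z‖ = (2 * n + 1) * |z| ^ (2 * n) / (2 * n + 1)‼ := by
        simp [termDeriv, abs_of_nonneg (by positivity : (0 : ℝ) ≤ 2 * n + 1)]
    _ ≤ (2 * n + 1) * (R ^ 2) ^ n / (n + 1)! := by gcongr
    _ = (2 * n + 1) / (n + 1) * ((R ^ 2) ^ n / n !) := by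
        push_cast [Nat.factorial_succ]
        field_simp
    _ ≤ 2 * ((R ^ 2) ^ n / n !) := by
        gcongr
        rw [div_le_iff₀ (by positivity)]
        linarith
    _ = 2 * (R ^ 2) ^ n / n ! := by ring

theorem summable_two_mul_pow_div_factorial (R : ℝ) : Summable fun n : ℕ => 2 * (R ^ 2) ^ n / n ! := by
  simpa [mul_div_assoc] using (Real.summable_pow_div_factorial (R ^ 2)).mul_left 2

theorem hasDerivAt_sum (y : ℝ) : HasDerivAt sum (1 + y * sum y) y := by
  set R := |y| + 1
  have hy : y ∈ Metric.ball (0 : ℝ) R := by simp [R]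
  have hball {z : ℝ} (hz : z ∈ Metric.ball (0 : ℝ) R) : |z| ≤ R := by
    simpa using (mem_ball_zero_iff.mp hz).le
  have hderiv : HasDerivAt sum (∑' n, termDeriv n y) y :=
    hasDerivAt_tsum_of_isPreconnected (summable_two_mul_pow_div_factorial R) Metric.isOpen_ball
      (convex_ball 0 R).isPreconnected (fun n z _ => hasDerivAt_term n z)
      (fun n z hz => norm_termDeriv_le (hball hz) n) (Metric.mem_ball_self (by positivity))
      (by simp [term]) hy
  have hsummable : Summable fun n => termDeriv n y :=
    (summable_two_mul_pow_div_factorial |y|).of_norm_bounded (norm_termDeriv_le le_rfl)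
  rwa [hsummable.tsum_eq_zero_add, termDeriv_zero, funext (termDeriv_succ · y), tsum_mul_left]
    at hderiv

theorem sum_eq (y : ℝ) :
    sum y = Real.exp (y ^ 2 / 2) * ∫ s in (0 : ℝ)..y, Real.exp (-s ^ 2 / 2) := by
  have hderiv (z : ℝ) : HasDerivAt (fun z => Real.exp (-z ^ 2 / 2) * sum z)
      (Real.exp (-z ^ 2 / 2)) z := by
    have hpoly : HasDerivAt (fun z : ℝ => -z ^ 2 / 2) (-z) z :=
      ((hasDerivAt_pow 2 z).neg.div_const 2).congr_deriv (by simp; ring)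
    exact (hpoly.exp.mul (hasDerivAt_sum z)).congr_deriv (by ring)
  have hftc := intervalIntegral.integral_eq_sub_of_hasDerivAt (fun z _ => hderiv z)
    ((by fun_prop : Continuous fun s : ℝ => Real.exp (-s ^ 2 / 2)).intervalIntegrable 0 y)
  have hsum0 : sum 0 = 0 := by simp [sum, term]
  rw [hftc, hsum0, mul_zero, sub_zero, ← mul_assoc, ← Real.exp_add, neg_div, add_neg_cancel,
    Real.exp_zero, one_mul]

end OddSeries

theorem mul_M_one_three_halves (y : ℝ) : y * M 1 (3 / 2) (y ^ 2 / 2) = OddSeries.sum y := by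
  rw [M, OddSeries.sum, ← tsum_mul_left]
  congr 1
  ext n
  have : (0 : ℝ) < (2 * n + 1)‼ := mod_cast Nat.doubleFactorial_pos _
  rw [ascPochhammer_eval_one, ascPochhammer_eval_three_halves, OddSeries.term, div_pow,
    ← pow_mul, pow_succ]
  field_simp

theorem integral_Iic_zero_exp_neg_sq_div_two :
    ∫ s in Set.Iic (0 : ℝ), Real.exp (-s ^ 2 / 2) = Real.sqrt (π / 2) := by
  have h := integral_comp_neg_Iic (0 : ℝ) fun x => Real.exp (-(1 / 2 : ℝ) * x ^ 2)
  simp only [neg_sq, neg_zero, integral_gaussian_Ioi] at h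
  have hintegrand : (fun s : ℝ => Real.exp (-s ^ 2 / 2)) = fun x => Real.exp (-(1 / 2) * x ^ 2) := by
    ext s
    ring_nf
  rw [hintegrand, h, show π / (1 / 2) = 2 ^ 2 * (π / 2) by ring, Real.sqrt_mul (by positivity),
    Real.sqrt_sq zero_le_two]
  ring

theorem integral_Iic_exp_neg_sq_div_two (y : ℝ) :
    ∫ s in Set.Iic y, Real.exp (-s ^ 2 / 2) =
      Real.sqrt (π / 2) + ∫ s in (0 : ℝ)..y, Real.exp (-s ^ 2 / 2) := by
  have hintegrable (a : ℝ) : IntegrableOn (fun s : ℝ => Real.exp (-s ^ 2 / 2)) (Set.Iic a) := by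
    simpa [neg_div, div_eq_inv_mul] using
      (integrable_exp_neg_mul_sq (b := 1 / 2) (by norm_num)).integrableOn
  rw [← intervalIntegral.integral_Iic_sub_Iic (hintegrable 0) (hintegrable y),
    integral_Iic_zero_exp_neg_sq_div_two]
  ring

theorem stmt_10 (y : ℝ) :
    y * M 1 (3 / 2) (y ^ 2 / 2) + Real.sqrt (Real.pi / 2) * M (1 / 2) (1 / 2) (y ^ 2 / 2) =
      Real.sqrt (2 * Real.pi) * Real.exp (y ^ 2 / 2) * Phi y := by
  rw [mul_M_one_three_halves, M_self_eq_exp one_half_pos, OddSeries.sum_eq, Phi,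
    integral_Iic_exp_neg_sq_div_two]
  have : Real.sqrt (2 * π) ≠ 0 := by positivity
  field_simp
  ring
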